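/- arXiv:2003.13126 — 2 statements merged into one kernel-verified Lean document; each statement's English description precedes it below -/
import Mathlib

section
/- Let (Ω, 𝓕, μ) be a probability space, X : Ω → ℝ and Z : Ω → ℝ^d Borel measurable random variables, and let F_{X|Z}(t|z) = (condDistrib X Z μ) z ((−∞, t]) be the conditional distribution function of X given Z = z, built from a regular conditional distribution. Assume that for (law of Z)-almost every z, the conditional law of X given Z = z is atomless (equivalently, t ↦ F_{X|Z}(t|z) is continuous). Define U₁(ω) = F_{X|Z}(X(ω) | Z(ω)). Then U₁ is uniformly distributed on [0,1] and U₁ is independent of Z. -/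
/-!
Disintegrating the joint law of `(Z, X)` as `μ.map Z ⊗ₘ condDistrib X Z μ`, the fibre of `U₁` over
`z` is the probability integral transform `x ↦ F(x|z)` of the atomless law `condDistrib X Z μ z`.
Its distribution function is continuous, so `{x | F(x|z) ≤ u}` is a ray `Iic a` with `F(a|z) = u`,
and the transform is uniform on `[0,1]` for a.e. `z`. Since this fibrewise law does not depend on
`z`, the joint law of `(U₁, Z)` is the product of the uniform law and the law of `Z`.
-/

open MeasureTheory ProbabilityTheory Set Filter Topology

theorem Monotone.exists_preimage_Iic_eq_Iic {F : ℝ → ℝ} (hmono : Monotone F)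
    (hcont : Continuous F) {u : ℝ} (hlo : ∃ x, F x ≤ u) (hhi : ∃ x, u < F x) :
    ∃ a, F ⁻¹' Iic u = Iic a ∧ F a = u := by
  obtain ⟨x₀, hx₀⟩ := hlo
  obtain ⟨x₁, hx₁⟩ := hhi
  set S := F ⁻¹' Iic u
  have hbdd : BddAbove S :=
    ⟨x₁, fun x hx => not_lt.1 fun h => (hx₁.trans_le (hmono h.le)).not_ge hx⟩
  have ha : sSup S ∈ S := (isClosed_Iic.preimage hcont).csSup_mem ⟨x₀, hx₀⟩ hbdd
  refine ⟨sSup S, Subset.antisymm (fun x hx => le_csSup hbdd hx) fun x hx => (hmono hx).trans ha,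
    le_antisymm ha ?_⟩
  have hright : ∀ᶠ x in 𝓝[>] sSup S, u ≤ F x := by
    filter_upwards [self_mem_nhdsWithin] with x hx
    exact (lt_of_not_ge fun h => (not_le.2 hx) (le_csSup hbdd h)).le
  exact _root_.ge_of_tendsto (hcont.continuousAt.tendsto.mono_left nhdsWithin_le_nhds) hright

namespace ProbabilityTheory

theorem continuous_cdf (ν : Measure ℝ) [IsProbabilityMeasure ν] [NullSingletonClass ν] :
    Continuous (cdf ν) := by
  refine continuous_iff_continuousAt.2 fun x =>
    continuousAt_iff_continuous_left_right.2 ⟨?_, (cdf ν).right_continuous x⟩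
  have hjump : (cdf ν).measure {x} = 0 := by rw [measure_cdf, measure_singleton]
  rw [StieltjesFunction.measure_singleton, ENNReal.ofReal_eq_zero, sub_nonpos] at hjump
  exact continuousWithinAt_Iio_iff_Iic.1 <|
    (monotone_cdf ν).continuousWithinAt_Iio_iff_leftLim_eq.2 <|
      le_antisymm ((monotone_cdf ν).leftLim_le le_rfl) hjump

theorem measure_cdf_preimage_Iic (ν : Measure ℝ) [IsProbabilityMeasure ν] [NullSingletonClass ν]
    (u : ℝ) :
    ν (cdf ν ⁻¹' Iic u) = ENNReal.ofReal (min u 1) := by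
  by_cases hlo : ∃ x, cdf ν x ≤ u
  · by_cases hhi : ∃ x, u < cdf ν x
    · obtain ⟨a, ha, hFa⟩ :=
        (monotone_cdf ν).exists_preimage_Iic_eq_Iic (continuous_cdf ν) hlo hhi
      rw [ha, ← ofReal_cdf, hFa, min_eq_left (hFa ▸ cdf_le_one ν a)]
    · push Not at hhi
      have hu : 1 ≤ u := le_of_tendsto' (tendsto_cdf_atTop ν) hhi
      rw [eq_univ_of_forall (s := cdf ν ⁻¹' Iic u) hhi, measure_univ, min_eq_right hu,
        ENNReal.ofReal_one]
  · push Not at hlo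
    have hu : u ≤ 0 := ge_of_tendsto' (tendsto_cdf_atBot ν) fun x => (hlo x).le
    rw [eq_empty_of_forall_notMem (s := cdf ν ⁻¹' Iic u) fun x hx => (hlo x).not_ge hx,
      measure_empty, eq_comm, ENNReal.ofReal_eq_zero]
    exact (min_le_left u 1).trans hu

theorem map_cdf_eq_volume_restrict_Icc (ν : Measure ℝ) [IsProbabilityMeasure ν]
    [NullSingletonClass ν] :
    ν.map (cdf ν) = volume.restrict (Icc 0 1) := by
  refine Measure.ext_of_Iic _ _ fun u => ?_
  have hIcc : Iic u ∩ Icc (0 : ℝ) 1 = Icc 0 (min u 1) := by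
    ext x
    simp only [mem_inter_iff, mem_Iic, mem_Icc, le_min_iff]
    tauto
  rw [Measure.map_apply (monotone_cdf ν).measurable measurableSet_Iic, measure_cdf_preimage_Iic,
    Measure.restrict_apply measurableSet_Iic, hIcc, Real.volume_Icc, sub_zero]

theorem Kernel.measurable_measure_Iic {α : Type*} [MeasurableSpace α]
    (κ : Kernel α ℝ) [IsSFiniteKernel κ] : Measurable fun p : α × ℝ => κ p.1 (Iic p.2) :=
  Kernel.measurable_kernel_prodMk_left (κ := κ.comap Prod.fst measurable_fst)
    (measurableSet_le measurable_snd measurable_fst.snd)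

end ProbabilityTheory

theorem MeasureTheory.Measure.map_compProd_eq_prod {α β γ : Type*} [MeasurableSpace α]
    [MeasurableSpace β] [MeasurableSpace γ] (ρ : Measure α) [SigmaFinite ρ] (κ : Kernel α β)
    [IsSFiniteKernel κ] (ν : Measure γ) [SigmaFinite ν] {f : α × β → γ} (hf : Measurable f)
    (h : ∀ᵐ a ∂ρ, (κ a).map (fun b => f (a, b)) = ν) :
    (ρ ⊗ₘ κ).map (fun p => (f p, p.1)) = ν.prod ρ := by
  have hg : Measurable fun p : α × β => (f p, p.1) := hf.prodMk measurable_fst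
  refine (Measure.prod_eq fun s t hs ht => ?_).symm
  have hslice : (fun a => κ a (Prod.mk a ⁻¹' ((fun p => (f p, p.1)) ⁻¹' s ×ˢ t))) =
      t.indicator fun a => κ a ((fun b => f (a, b)) ⁻¹' s) := by
    ext a
    by_cases ha : a ∈ t <;> simp [ha, preimage]
  have hfiber : ∀ᵐ a ∂ρ, κ a ((fun b => f (a, b)) ⁻¹' s) = ν s := by
    filter_upwards [h] with a ha
    rw [← ha, Measure.map_apply (f := fun b => f (a, b)) (by fun_prop) hs]
  rw [Measure.map_apply hg (hs.prod ht), Measure.compProd_apply (hg (hs.prod ht)), hslice,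
    lintegral_indicator ht, setLIntegral_congr_fun_ae ht (hfiber.mono fun a ha _ => ha),
    setLIntegral_const, mul_comm]

/-- probability integral transform / Rosenblatt transform:
if `F_{X|Z}(t|z) = condDistrib X Z μ z (Iic t)` is the conditional distribution function
of `X` given `Z`, and the conditional law of `X` given `Z = z` is atomless for
`(μ.map Z)`-a.e. `z`, then `U₁ = F_{X|Z}(X|Z)` is uniformly distributed on `[0,1]`
and `U₁` is independent of `Z`. -/
theorem residual_uniform_and_indep {Ω : Type*} [MeasurableSpace Ω]
    (μ : Measure Ω) [IsProbabilityMeasure μ] {d : ℕ}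
    (X : Ω → ℝ) (Z : Ω → Fin d → ℝ) (hX : Measurable X) (hZ : Measurable Z)
    (hatomless : ∀ᵐ z ∂(μ.map Z), ∀ x : ℝ, (condDistrib X Z μ) z {x} = 0) :
    μ.map (fun ω => ((condDistrib X Z μ) (Z ω) (Set.Iic (X ω))).toReal) =
        MeasureTheory.volume.restrict (Set.Icc (0 : ℝ) 1) ∧
      IndepFun (fun ω => ((condDistrib X Z μ) (Z ω) (Set.Iic (X ω))).toReal) Z μ := by
  set κ := condDistrib X Z μ
  set U : Ω → ℝ := fun ω => (κ (Z ω) (Iic (X ω))).toReal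
  set G : (Fin d → ℝ) × ℝ → ℝ := fun p => (κ p.1 (Iic p.2)).toReal
  have hG : Measurable G := (Kernel.measurable_measure_Iic κ).ennreal_toReal
  have hjoint : μ.map (fun ω => (U ω, Z ω)) = (volume.restrict (Icc 0 1)).prod (μ.map Z) := by
    rw [show (fun ω => (U ω, Z ω)) = (fun p => (G p, p.1)) ∘ fun ω => (Z ω, X ω) from rfl,
      ← Measure.map_map (hG.prodMk measurable_fst) (hZ.prodMk hX),
      ← compProd_map_condDistrib hX.aemeasurable]
    refine Measure.map_compProd_eq_prod _ _ _ hG ?_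
    filter_upwards [hatomless] with z hz
    have : NullSingletonClass (κ z) := ⟨hz⟩
    rw [show (fun x => G (z, x)) = cdf (κ z) from funext fun x => (cdf_eq_real _ x).symm]
    exact map_cdf_eq_volume_restrict_Icc (κ z)
  have := Measure.isProbabilityMeasure_map (μ := μ) hZ.aemeasurable
  have hlaw : μ.map U = volume.restrict (Icc 0 1) := by
    rw [← Measure.fst_map_prodMk₀ hZ.aemeasurable, hjoint, Measure.fst_prod]
  refine ⟨hlaw, (indepFun_iff_map_prod_eq_prod_map_map ?_ hZ.aemeasurable).2 ?_⟩
  · exact (hG.comp (hZ.prodMk hX)).aemeasurable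
  · rw [hlaw, hjoint]
end

section
/- (Uniform Slutsky lemma.) Let ι be an index set and for each i ∈ ι let (Ω_i, 𝓕_i, P_i) be a probability space carrying real random variables X_n^i, Y_n^i (n ∈ ℕ) and X^i. Suppose (i) X_n converges uniformly in distribution to X over the family, in the sense that for every bounded Lipschitz continuous f : ℝ → ℝ, sup_{i ∈ ι} |E_{P_i} f(X_n^i) − E_{P_i} f(X^i)| → 0 as n → ∞; and (ii) Y_n converges to 0 in probability uniformly over the family: for every ε > 0, sup_{i ∈ ι} P_i(|Y_n^i| > ε) → 0. Then X_n + Y_n converges uniformly in distribution to X over the family: for every bounded Lipschitz continuous f : ℝ → ℝ, sup_{i ∈ ι} |E_{P_i} f(X_n^i + Y_n^i) − E_{P_i} f(X^i)| → 0 as n → ∞. -/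
open MeasureTheory Filter

open scoped NNReal

/-! On `{|Y| ≤ ε}` the Lipschitz bound gives `|f (X + Y) - f X| ≤ K ε`; on the complement the
difference is at most `2 C`, and that event has probability uniformly small in `i`. Hence
`sup_i |E f (X_n + Y_n) - E f X| ≤ K ε + 2 C sup_i P_i (|Y_n| > ε) + sup_i |E f X_n - E f X|`,
whose right side tends to `K ε`, which can be made arbitrarily small. -/

section

variable {f : ℝ → ℝ} {K : ℝ≥0} {C : ℝ}

lemma LipschitzWith.abs_comp_add_sub_le (hf : LipschitzWith K f) (hC : ∀ x, |f x| ≤ C)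
    {ε : ℝ} (hε : 0 ≤ ε) (x y : ℝ) :
    |f (x + y) - f x| ≤ K * ε + {y | ε < |y|}.indicator (fun _ => 2 * C) y := by
  by_cases hy : ε < |y|
  · rw [Set.indicator_of_mem (show y ∈ {y | ε < |y|} from hy)]
    have := (abs_sub _ _).trans (add_le_add (hC (x + y)) (hC x))
    nlinarith [K.2]
  · rw [Set.indicator_of_notMem (show y ∉ {y | ε < |y|} from hy), add_zero]
    calc |f (x + y) - f x| ≤ K * |x + y - x| := by
          simpa [Real.dist_eq] using hf.dist_le_mul (x + y) x
      _ ≤ K * ε := by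
          rw [add_sub_cancel_left]; exact mul_le_mul_of_nonneg_left (not_lt.1 hy) K.2

section ProbabilitySpace

variable {Ω : Type*} [MeasurableSpace Ω] {μ : Measure Ω} [IsProbabilityMeasure μ]

lemma abs_integral_comp_le (hC : ∀ x, |f x| ≤ C) (g : Ω → ℝ) : |∫ ω, f (g ω) ∂μ| ≤ C := by
  simpa using norm_integral_le_of_norm_le_const (μ := μ)
    (.of_forall fun ω => (Real.norm_eq_abs _).trans_le (hC (g ω)))

lemma integrable_comp_of_continuous_of_abs_le (hf : Continuous f) (hC : ∀ x, |f x| ≤ C) {g : Ω → ℝ}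
    (hg : Measurable g) : Integrable (fun ω => f (g ω)) μ :=
  .of_bound (hf.measurable.comp hg).aestronglyMeasurable C
    (.of_forall fun ω => (Real.norm_eq_abs _).trans_le (hC (g ω)))

lemma abs_integral_comp_add_sub_le (hf : LipschitzWith K f) (hC : ∀ x, |f x| ≤ C)
    {X Y : Ω → ℝ} (hX : Measurable X) (hY : Measurable Y) {ε : ℝ} (hε : 0 ≤ ε) :
    |∫ ω, f (X ω + Y ω) ∂μ - ∫ ω, f (X ω) ∂μ| ≤ K * ε + 2 * C * μ.real {ω | ε < |Y ω|} := by
  have hS : MeasurableSet {ω | ε < |Y ω|} := measurableSet_lt measurable_const hY.abs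
  rw [← integral_sub
    (integrable_comp_of_continuous_of_abs_le (g := fun ω => X ω + Y ω) hf.continuous hC (hX.add hY))
    (integrable_comp_of_continuous_of_abs_le hf.continuous hC hX)]
  calc |∫ ω, f (X ω + Y ω) - f (X ω) ∂μ|
      ≤ ∫ ω, |f (X ω + Y ω) - f (X ω)| ∂μ := abs_integral_le_integral_abs
    _ ≤ ∫ ω, (K * ε + {ω | ε < |Y ω|}.indicator (fun _ => 2 * C) ω) ∂μ :=
        integral_mono_of_nonneg (.of_forall fun _ => abs_nonneg _)
          ((integrable_const _).add ((integrable_const _).indicator hS))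
          (.of_forall fun ω => hf.abs_comp_add_sub_le hC hε (X ω) (Y ω))
    _ = K * ε + 2 * C * μ.real {ω | ε < |Y ω|} := by
        rw [integral_add (integrable_const _) ((integrable_const _).indicator hS),
          integral_indicator_const _ hS]
        simp [mul_comm]

end ProbabilitySpace

section Family

variable {ι : Type*} {Ω : ι → Type*} [∀ i, MeasurableSpace (Ω i)] {P : ∀ i, Measure (Ω i)}
  [∀ i, IsProbabilityMeasure (P i)]

lemma bddAbove_range_abs_integral_comp_sub (hC : ∀ x, |f x| ≤ C) (X Z : ∀ i, Ω i → ℝ) :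
    BddAbove (Set.range fun i => |∫ ω, f (X i ω) ∂P i - ∫ ω, f (Z i ω) ∂P i|) := by
  refine ⟨2 * C, ?_⟩
  rintro _ ⟨i, rfl⟩
  linarith [abs_sub (∫ ω, f (X i ω) ∂P i) (∫ ω, f (Z i ω) ∂P i),
    abs_integral_comp_le (μ := P i) hC (X i), abs_integral_comp_le (μ := P i) hC (Z i)]

lemma iSup_abs_integral_comp_add_sub_le (hf : LipschitzWith K f) (hC : ∀ x, |f x| ≤ C)
    {X Y : ∀ i, Ω i → ℝ} (Z : ∀ i, Ω i → ℝ) (hX : ∀ i, Measurable (X i))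
    (hY : ∀ i, Measurable (Y i)) {ε : ℝ} (hε : 0 ≤ ε) :
    ⨆ i, |∫ ω, f (X i ω + Y i ω) ∂P i - ∫ ω, f (Z i ω) ∂P i|
      ≤ K * ε + 2 * C * (⨆ i, P i {ω | ε < |Y i ω|}).toReal
        + ⨆ i, |∫ ω, f (X i ω) ∂P i - ∫ ω, f (Z i ω) ∂P i| := by
  have hC0 : 0 ≤ C := (abs_nonneg _).trans (hC 0)
  have hQ : (⨆ i, P i {ω | ε < |Y i ω|}) ≠ ⊤ :=
    ne_top_of_le_ne_top ENNReal.one_ne_top (iSup_le fun _ => prob_le_one)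
  have hRHS : 0 ≤ K * ε + 2 * C * (⨆ i, P i {ω | ε < |Y i ω|}).toReal
      + ⨆ i, |∫ ω, f (X i ω) ∂P i - ∫ ω, f (Z i ω) ∂P i| := by
    have := Real.iSup_nonneg fun i => abs_nonneg (∫ ω, f (X i ω) ∂P i - ∫ ω, f (Z i ω) ∂P i)
    positivity
  refine Real.iSup_le (fun i => ?_) hRHS
  have hQi : (P i).real {ω | ε < |Y i ω|} ≤ (⨆ i, P i {ω | ε < |Y i ω|}).toReal :=
    ENNReal.toReal_mono hQ (le_iSup (fun i => P i {ω | ε < |Y i ω|}) i)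
  calc |∫ ω, f (X i ω + Y i ω) ∂P i - ∫ ω, f (Z i ω) ∂P i|
      ≤ |∫ ω, f (X i ω + Y i ω) ∂P i - ∫ ω, f (X i ω) ∂P i|
        + |∫ ω, f (X i ω) ∂P i - ∫ ω, f (Z i ω) ∂P i| := abs_sub_le _ _ _
    _ ≤ K * ε + 2 * C * (P i).real {ω | ε < |Y i ω|}
        + ⨆ i, |∫ ω, f (X i ω) ∂P i - ∫ ω, f (Z i ω) ∂P i| :=
      add_le_add (abs_integral_comp_add_sub_le hf hC (hX i) (hY i) hε)
        (le_ciSup (bddAbove_range_abs_integral_comp_sub hC X Z) i)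
    _ ≤ _ := by gcongr

end Family

end

theorem uniform_slutsky_general {ι : Type*} {Ωf : ι → Type*} [∀ i, MeasurableSpace (Ωf i)]
    (P : ∀ i, Measure (Ωf i)) [∀ i, IsProbabilityMeasure (P i)]
    (X Y : ℕ → ∀ i, Ωf i → ℝ) (Xlim : ∀ i, Ωf i → ℝ)
    (hXmeas : ∀ n i, Measurable (X n i)) (hYmeas : ∀ n i, Measurable (Y n i))
    (hXd : ∀ f : ℝ → ℝ, ∀ K : NNReal, LipschitzWith K f →
      ∀ Cf : ℝ, (∀ x : ℝ, |f x| ≤ Cf) →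
      Tendsto (fun n => ⨆ i : ι,
          |(∫ ω, f (X n i ω) ∂(P i)) - ∫ ω, f (Xlim i ω) ∂(P i)|) atTop (nhds (0 : ℝ)))
    (hY : ∀ ε > (0 : ℝ),
      Tendsto (fun n => ⨆ i : ι, P i {ω | ε < |Y n i ω|}) atTop (nhds (0 : ENNReal))) :
    ∀ f : ℝ → ℝ, ∀ K : NNReal, LipschitzWith K f →
      ∀ Cf : ℝ, (∀ x : ℝ, |f x| ≤ Cf) →
      Tendsto (fun n => ⨆ i : ι,
          |(∫ ω, f (X n i ω + Y n i ω) ∂(P i)) - ∫ ω, f (Xlim i ω) ∂(P i)|) atTop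
        (nhds (0 : ℝ)) := by
  intro f K hf C hC
  refine tendsto_order.2 ⟨fun δ hδ => .of_forall fun n =>
    hδ.trans_le (Real.iSup_nonneg fun _ => abs_nonneg _), fun δ hδ => ?_⟩
  obtain ⟨ε, hε, hKε⟩ : ∃ ε > 0, (K : ℝ) * ε < δ :=
    ⟨δ / (K + 1), by positivity, by
      rw [← mul_div_assoc, div_lt_iff₀ (by positivity)]; nlinarith [K.2]⟩
  have hbound : Tendsto (fun n => K * ε + 2 * C * (⨆ i, P i {ω | ε < |Y n i ω|}).toReal
      + ⨆ i, |∫ ω, f (X n i ω) ∂P i - ∫ ω, f (Xlim i ω) ∂P i|) atTop (nhds (K * ε)) := by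
    simpa using (tendsto_const_nhds.add (((ENNReal.tendsto_toReal ENNReal.zero_ne_top).comp
      (hY ε hε)).const_mul (2 * C))).add (hXd f K hf C hC)
  filter_upwards [hbound.eventually_lt_const hKε] with n hn
  exact (iSup_abs_integral_comp_add_sub_le hf hC Xlim (hXmeas n) (hYmeas n) hε.le).trans_lt hn

/-- uniform Slutsky lemma: if `X_n` converges uniformly in distribution
to `X` over the family of probability spaces `(Ω_i, P_i)` (tested against bounded
Lipschitz functions) and `Y_n → 0` uniformly in probability over the family, then
`X_n + Y_n` converges uniformly in distribution to `X` over the family. -/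
theorem uniform_slutsky {ι : Type*} {Ωf : ι → Type*} [∀ i, MeasurableSpace (Ωf i)]
    (P : ∀ i, Measure (Ωf i)) [∀ i, IsProbabilityMeasure (P i)]
    (X Y : ℕ → ∀ i, Ωf i → ℝ) (Xlim : ∀ i, Ωf i → ℝ)
    (hXmeas : ∀ n i, Measurable (X n i)) (hYmeas : ∀ n i, Measurable (Y n i))
    (hXlimmeas : ∀ i, Measurable (Xlim i))
    (hXd : ∀ f : ℝ → ℝ, ∀ K : NNReal, LipschitzWith K f →
      ∀ Cf : ℝ, (∀ x : ℝ, |f x| ≤ Cf) →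
      Tendsto (fun n => ⨆ i : ι,
          |(∫ ω, f (X n i ω) ∂(P i)) - ∫ ω, f (Xlim i ω) ∂(P i)|) atTop (nhds (0 : ℝ)))
    (hY : ∀ ε > (0 : ℝ),
      Tendsto (fun n => ⨆ i : ι, P i {ω | ε < |Y n i ω|}) atTop (nhds (0 : ENNReal))) :
    ∀ f : ℝ → ℝ, ∀ K : NNReal, LipschitzWith K f →
      ∀ Cf : ℝ, (∀ x : ℝ, |f x| ≤ Cf) →
      Tendsto (fun n => ⨆ i : ι,
          |(∫ ω, f (X n i ω + Y n i ω) ∂(P i)) - ∫ ω, f (Xlim i ω) ∂(P i)|) atTop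
        (nhds (0 : ℝ)) :=
  uniform_slutsky_general P X Y Xlim hXmeas hYmeas hXd hY
end
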